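/- arXiv:1906.02449 — 3 statements merged into one kernel-verified Lean document; each statement's English description precedes it below -/
import Mathlib

section
/- Let X be a normed space and (x_n) a sequence in X. The following are equivalent: (1) every subseries of ∑ x_n has bounded partial sums; (2) there is a uniform bound M' > 0 on the norms of all partial sums of all subseries; (3) ∑ x_n is uniformly unconditionally bounded; (4) every rearrangement of ∑ x_n has bounded partial sums. -/
/-!
Everything is measured against the finite sums `∑ i ∈ F, x i`: the partial sums of a subseries or
a rearrangement are finite sums, so a bound on all of them gives (2) and (3). Conversely, if the
finite sums are unbounded, one finds consecutive intervals `[N k, N (k + 1))` partitioning `ℕ`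
and sets `G k` inside them with `‖∑ i ∈ G k, x i‖ > k`. The subseries running through `⋃ k, G k`,
and the rearrangement listing each interval with `G k` first, both have two partial sums
differing by `∑ i ∈ G k, x i`, so their partial sums are unbounded.
-/

open Finset

universe u

theorem Nat.sum_range_count_nth {M : Type*} [AddCommMonoid M] {p : ℕ → Prop} [DecidablePred p]
    (hp : (Set.ofPred p).Infinite) (y : ℕ → M) (n : ℕ) :
    ∑ i ∈ range (Nat.count p n), y (Nat.nth p i) = ∑ b ∈ range n with p b, y b := by
  rw [← sum_image (Nat.nth_strictMono hp).injective.injOn]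
  congr 1
  ext b
  simp only [mem_image, mem_range, mem_filter]
  constructor
  · rintro ⟨i, hi, rfl⟩
    exact ⟨Nat.nth_lt_of_lt_count hi, Nat.nth_mem_of_infinite hp i⟩
  · rintro ⟨hb, hpb⟩
    exact ⟨Nat.count p b, Nat.count_strict_mono hpb hb, Nat.nth_count hpb⟩

theorem exists_equiv_comp_eq_of_mk_fiber_eq {α β : Type u} {γ : Type*} {f : α → γ} {g : β → γ}
    (h : ∀ c, Cardinal.mk {a // f a = c} = Cardinal.mk {b // g b = c}) :
    ∃ e : α ≃ β, ∀ a, g (e a) = f a :=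
  ⟨Equiv.ofFiberEquiv fun c => (Cardinal.eq.1 (h c)).some, Equiv.ofFiberEquiv_map _⟩

section

variable {X : Type*} [SeminormedAddCommGroup X]

def BoundedFinsetSums {ι : Type*} (x : ι → X) : Prop :=
  ∃ M, ∀ F : Finset ι, ‖∑ i ∈ F, x i‖ ≤ M

theorem BoundedFinsetSums.exists_pos_bound_comp_injective {ι : Type*} {x : ι → X}
    (h : BoundedFinsetSums x) :
    ∃ M > (0 : ℝ), ∀ g : ℕ → ι, Function.Injective g →
      ∀ n, ‖∑ i ∈ range n, x (g i)‖ ≤ M := by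
  classical
  obtain ⟨M, hM⟩ := h
  refine ⟨max M 1, by positivity, fun g hg n => ?_⟩
  rw [← sum_image hg.injOn]
  exact (hM _).trans (le_max_left _ _)

theorem exists_lt_norm_sum_range_of_sub {y : ℕ → X}
    (h : ∀ k : ℕ, ∃ m n, (k : ℝ) < ‖∑ i ∈ range m, y i - ∑ i ∈ range n, y i‖) (M : ℝ) :
    ∃ n, M < ‖∑ i ∈ range n, y i‖ := by
  by_contra! hM
  obtain ⟨k, hk⟩ := exists_nat_gt (2 * M)
  obtain ⟨m, n, hmn⟩ := h k
  linarith [norm_sub_le (∑ i ∈ range m, y i) (∑ i ∈ range n, y i), hM m, hM n]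

theorem exists_subset_Ico_lt_norm_sum {x : ℕ → X} (h : ¬ BoundedFinsetSums x) (N : ℕ) (C : ℝ) :
    ∃ N' > N, ∃ G ⊆ Ico N N', C < ‖∑ i ∈ G, x i‖ := by
  obtain ⟨F, hF⟩ : ∃ F : Finset ℕ, C + ∑ i ∈ range N, ‖x i‖ < ‖∑ i ∈ F, x i‖ := by
    simp only [BoundedFinsetSums, not_exists, not_forall, not_le] at h
    exact h _
  obtain ⟨N', hN'⟩ := F.exists_nat_subset_range
  refine ⟨max N' N + 1, by omega, {i ∈ F | N ≤ i}, fun a ha => ?_, ?_⟩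
  · have := mem_range.1 (hN' (mem_filter.1 ha).1)
    simp only [mem_filter, mem_Ico] at ha ⊢
    omega
  · have hlow : ‖∑ i ∈ F with ¬ N ≤ i, x i‖ ≤ ∑ i ∈ range N, ‖x i‖ :=
      (norm_sum_le _ _).trans <| sum_le_sum_of_subset_of_nonneg
        (fun a ha => by simp only [mem_filter, mem_range] at ha ⊢; omega)
        fun _ _ _ => norm_nonneg _
    have := norm_add_le (∑ i ∈ F with N ≤ i, x i) (∑ i ∈ F with ¬ N ≤ i, x i)
    rw [sum_filter_add_sum_filter_not] at this
    linarith

end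

structure SumBlocks {X : Type*} [SeminormedAddCommGroup X] (x : ℕ → X) where
  N : ℕ → ℕ
  G : ℕ → Finset ℕ
  N_zero : N 0 = 0
  strictMono_N : StrictMono N
  G_subset : ∀ k, G k ⊆ Ico (N k) (N (k + 1))
  lt_norm_sum : ∀ k : ℕ, (k : ℝ) < ‖∑ i ∈ G k, x i‖

namespace SumBlocks

variable {X : Type*} [SeminormedAddCommGroup X] {x : ℕ → X}

theorem nonempty_of_not_boundedFinsetSums (h : ¬ BoundedFinsetSums x) :
    Nonempty (SumBlocks x) := by
  choose N' hN' G hG hC using exists_subset_Ico_lt_norm_sum h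
  let N : ℕ → ℕ := fun k => Nat.rec 0 (fun k n => N' n k) k
  exact ⟨⟨N, fun k => G (N k) k, rfl, strictMono_nat_of_lt_succ fun k => hN' (N k) k,
    fun k => hG (N k) k, fun k => hC (N k) k⟩⟩

variable (B : SumBlocks x)

theorem G_nonempty (k : ℕ) : (B.G k).Nonempty := by
  refine nonempty_iff_ne_empty.2 fun h => ?_
  have := B.lt_norm_sum k
  rw [h, sum_empty, norm_zero] at this
  exact this.not_ge k.cast_nonneg

theorem card_G_le (k : ℕ) : #(B.G k) ≤ B.N (k + 1) - B.N k :=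
  (card_le_card (B.G_subset k)).trans_eq (Nat.card_Ico _ _)

theorem le_of_mem_Ico {j k a : ℕ} (hj : a ∈ Ico (B.N j) (B.N (j + 1)))
    (hk : a ∈ Ico (B.N k) (B.N (k + 1))) : j ≤ k := by
  by_contra! hkj
  have : B.N (k + 1) ≤ B.N j := B.strictMono_N.monotone hkj
  simp only [mem_Ico] at hj hk
  omega

theorem exists_lt_N_succ (a : ℕ) : ∃ k, a < B.N (k + 1) :=
  ⟨a, (Nat.lt_succ_self a).trans_le B.strictMono_N.le_apply⟩

open Classical in
noncomputable def index (a : ℕ) : ℕ := Nat.find (B.exists_lt_N_succ a)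

theorem mem_Ico_index (a : ℕ) : a ∈ Ico (B.N (B.index a)) (B.N (B.index a + 1)) := by
  classical
  refine mem_Ico.2 ⟨?_, Nat.find_spec (B.exists_lt_N_succ a)⟩
  rcases h : B.index a with _ | j
  · simp [B.N_zero]
  · exact not_lt.1 (Nat.find_min (B.exists_lt_N_succ a) (h ▸ j.lt_succ_self : j < B.index a))

theorem index_eq_iff {a k : ℕ} : B.index a = k ↔ a ∈ Ico (B.N k) (B.N (k + 1)) :=
  ⟨fun h => h ▸ B.mem_Ico_index a, fun h =>
    le_antisymm (B.le_of_mem_Ico (B.mem_Ico_index a) h) (B.le_of_mem_Ico h (B.mem_Ico_index a))⟩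

def IsSelected (b : ℕ) : Prop := b ∈ B.G (B.index b)

theorem isSelected_iff {b k : ℕ} (hb : b ∈ Ico (B.N k) (B.N (k + 1))) :
    B.IsSelected b ↔ b ∈ B.G k := by
  rw [IsSelected, B.index_eq_iff.2 hb]

theorem infinite_isSelected : (Set.ofPred B.IsSelected).Infinite :=
  Set.infinite_of_forall_exists_gt fun a => by
    obtain ⟨b, hb⟩ := B.G_nonempty (a + 1)
    have hI := B.G_subset _ hb
    refine ⟨b, (B.isSelected_iff hI).2 hb, ?_⟩
    have : a + 1 ≤ B.N (a + 1) := B.strictMono_N.le_apply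
    rw [mem_Ico] at hI
    omega

theorem filter_isSelected_Ico [DecidablePred B.IsSelected] (k : ℕ) :
    {b ∈ Ico (B.N k) (B.N (k + 1)) | B.IsSelected b} = B.G k := by
  ext b
  rw [mem_filter]
  exact ⟨fun ⟨hI, hb⟩ => (B.isSelected_iff hI).1 hb,
    fun hb => ⟨B.G_subset k hb, (B.isSelected_iff (B.G_subset k hb)).2 hb⟩⟩

theorem exists_strictMono_lt_norm_sum (B : SumBlocks x) :
    ∃ s : ℕ → ℕ, StrictMono s ∧ ∀ M : ℝ, ∃ n, M < ‖∑ i ∈ range n, x (s i)‖ := by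
  classical
  have hinf := B.infinite_isSelected
  refine ⟨Nat.nth B.IsSelected, Nat.nth_strictMono hinf, exists_lt_norm_sum_range_of_sub
    fun k => ⟨Nat.count B.IsSelected (B.N (k + 1)), Nat.count B.IsSelected (B.N k), ?_⟩⟩
  rw [Nat.sum_range_count_nth hinf, Nat.sum_range_count_nth hinf, sum_filter, sum_filter,
    ← sum_Ico_eq_sub _ (B.strictMono_N.monotone k.le_succ), ← sum_filter, filter_isSelected_Ico]
  exact B.lt_norm_sum k

/- The rearrangement will carry `positionLabel` to `valueLabel`: it maps the first `#(G k)`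
positions of the `k`-th interval onto `G k` and the remaining ones onto the rest of the interval. -/
open Classical in
noncomputable def positionLabel (a : ℕ) : ℕ × Bool :=
  (B.index a, decide (a < B.N (B.index a) + #(B.G (B.index a))))

open Classical in
noncomputable def valueLabel (b : ℕ) : ℕ × Bool :=
  (B.index b, decide (b ∈ B.G (B.index b)))

def positionFiber : ℕ × Bool → Finset ℕ
  | (k, true) => Ico (B.N k) (B.N k + #(B.G k))
  | (k, false) => Ico (B.N k + #(B.G k)) (B.N (k + 1))

def valueFiber : ℕ × Bool → Finset ℕ
  | (k, true) => B.G k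
  | (k, false) => Ico (B.N k) (B.N (k + 1)) \ B.G k

theorem positionLabel_eq_iff {a : ℕ} : ∀ {c}, B.positionLabel a = c ↔ a ∈ B.positionFiber c
  | (k, t) => by
    have hI := B.index_eq_iff (a := a) (k := k)
    have hG := B.card_G_le k
    have hN := B.strictMono_N.monotone k.le_succ
    cases t <;>
    · simp only [positionLabel, positionFiber, Prod.mk.injEq, decide_eq_true_eq,
        decide_eq_false_iff_not, mem_Ico] at hI ⊢
      constructor
      · rintro ⟨rfl, h⟩
        have := hI.1 rfl
        omega
      · intro h
        obtain rfl := hI.2 (by omega)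
        exact ⟨rfl, by omega⟩

theorem valueLabel_eq_iff {b : ℕ} : ∀ {c}, B.valueLabel b = c ↔ b ∈ B.valueFiber c
  | (k, false) => by
    simp only [valueLabel, valueFiber, Prod.mk.injEq, decide_eq_false_iff_not, mem_sdiff]
    constructor
    · rintro ⟨rfl, h⟩
      exact ⟨B.mem_Ico_index b, h⟩
    · rintro ⟨hI, h⟩
      obtain rfl := B.index_eq_iff.2 hI
      exact ⟨rfl, h⟩
  | (k, true) => by
    simp only [valueLabel, valueFiber, Prod.mk.injEq, decide_eq_true_eq]
    constructor
    · rintro ⟨rfl, h⟩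
      exact h
    · intro h
      obtain rfl := B.index_eq_iff.2 (B.G_subset k h)
      exact ⟨rfl, h⟩

theorem card_positionFiber : ∀ c, #(B.positionFiber c) = #(B.valueFiber c)
  | (k, true) => by simp [positionFiber, valueFiber]
  | (k, false) => by
    have hG := B.card_G_le k
    simp only [positionFiber, valueFiber, Nat.card_Ico, card_sdiff_of_subset (B.G_subset k)]
    omega

theorem exists_bijective_lt_norm_sum (B : SumBlocks x) :
    ∃ p : ℕ → ℕ, Function.Bijective p ∧ ∀ M : ℝ, ∃ n, M < ‖∑ i ∈ range n, x (p i)‖ := by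
  classical
  obtain ⟨e, he⟩ := exists_equiv_comp_eq_of_mk_fiber_eq (f := B.positionLabel)
    (g := B.valueLabel) fun c => by
      rw [Cardinal.mk_congr (Equiv.subtypeEquivRight fun a => B.positionLabel_eq_iff),
        Cardinal.mk_congr (Equiv.subtypeEquivRight fun b => B.valueLabel_eq_iff)]
      simp [B.card_positionFiber c]
  have himage (c : ℕ × Bool) : (B.positionFiber c).image e = B.valueFiber c := by
    ext b
    rw [mem_image, ← B.valueLabel_eq_iff]
    constructor
    · rintro ⟨a, ha, rfl⟩
      rw [he, B.positionLabel_eq_iff.2 ha]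
    · intro hb
      refine ⟨e.symm b, B.positionLabel_eq_iff.1 ?_, e.apply_symm_apply b⟩
      rw [← he, e.apply_symm_apply, hb]
  refine ⟨e, e.bijective, exists_lt_norm_sum_range_of_sub
    fun k => ⟨B.N k + #(B.G k), B.N k, ?_⟩⟩
  have hsum : ∑ i ∈ B.positionFiber (k, true), x (e i) = ∑ b ∈ B.G k, x b := by
    rw [← sum_image e.injective.injOn, himage]
    rfl
  rw [← sum_Ico_eq_sub _ (Nat.le_add_right _ _)]
  exact hsum ▸ B.lt_norm_sum k

end SumBlocks

namespace BoundedFinsetSums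

variable {X : Type*} [SeminormedAddCommGroup X] {x : ℕ → X}

theorem of_subseries
    (h : ∀ s : ℕ → ℕ, StrictMono s → ∃ M : ℝ, ∀ n : ℕ, ‖∑ i ∈ range n, x (s i)‖ ≤ M) :
    BoundedFinsetSums x := by
  by_contra hx
  obtain ⟨B⟩ := SumBlocks.nonempty_of_not_boundedFinsetSums hx
  obtain ⟨s, hs, hlarge⟩ := B.exists_strictMono_lt_norm_sum
  obtain ⟨M, hM⟩ := h s hs
  obtain ⟨n, hn⟩ := hlarge M
  exact (hM n).not_gt hn

theorem of_rearrangements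
    (h : ∀ p : ℕ → ℕ, Function.Bijective p → ∃ M : ℝ, ∀ n : ℕ, ‖∑ i ∈ range n, x (p i)‖ ≤ M) :
    BoundedFinsetSums x := by
  by_contra hx
  obtain ⟨B⟩ := SumBlocks.nonempty_of_not_boundedFinsetSums hx
  obtain ⟨p, hp, hlarge⟩ := B.exists_bijective_lt_norm_sum
  obtain ⟨M, hM⟩ := h p hp
  obtain ⟨n, hn⟩ := hlarge M
  exact (hM n).not_gt hn

theorem subseries_le (h : BoundedFinsetSums x) :
    ∃ M' > (0 : ℝ), ∀ s : ℕ → ℕ, StrictMono s → ∀ n : ℕ, ‖∑ i ∈ range n, x (s i)‖ ≤ M' :=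
  h.exists_pos_bound_comp_injective.imp fun _ ⟨hM, hb⟩ => ⟨hM, fun s hs => hb s hs.injective⟩

theorem rearrangements_le (h : BoundedFinsetSums x) :
    ∃ M > (0 : ℝ), ∀ p : ℕ → ℕ, Function.Bijective p → ∀ n : ℕ, ‖∑ i ∈ range n, x (p i)‖ ≤ M :=
  h.exists_pos_bound_comp_injective.imp fun _ ⟨hM, hb⟩ => ⟨hM, fun p hp => hb p hp.injective⟩

end BoundedFinsetSums

theorem uub_tfae_general
    {X : Type*} [NormedAddCommGroup X] (x : ℕ → X) :
    List.TFAE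
      [ ∀ s : ℕ → ℕ, StrictMono s →
          ∃ M : ℝ, ∀ n : ℕ, ‖∑ i ∈ Finset.range n, x (s i)‖ ≤ M,
        ∃ M' > (0 : ℝ), ∀ s : ℕ → ℕ, StrictMono s →
          ∀ n : ℕ, ‖∑ i ∈ Finset.range n, x (s i)‖ ≤ M',
        ∃ M > (0 : ℝ), ∀ p : ℕ → ℕ, Function.Bijective p →
          ∀ n : ℕ, ‖∑ i ∈ Finset.range n, x (p i)‖ ≤ M,
        ∀ p : ℕ → ℕ, Function.Bijective p →
          ∃ M : ℝ, ∀ n : ℕ, ‖∑ i ∈ Finset.range n, x (p i)‖ ≤ M ] := by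
  tfae_have 1 → 2 := fun h => (BoundedFinsetSums.of_subseries h).subseries_le
  tfae_have 2 → 1 := fun ⟨M, _, hM⟩ s hs => ⟨M, hM s hs⟩
  tfae_have 1 → 3 := fun h => (BoundedFinsetSums.of_subseries h).rearrangements_le
  tfae_have 3 → 4 := fun ⟨M, _, hM⟩ p hp => ⟨M, hM p hp⟩
  tfae_have 4 → 2 := fun h => (BoundedFinsetSums.of_rearrangements h).subseries_le
  tfae_finish

theorem uub_tfae
    {X : Type*} [NormedAddCommGroup X] [NormedSpace ℝ X] (x : ℕ → X) :
    List.TFAE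
      [ ∀ s : ℕ → ℕ, StrictMono s →
          ∃ M : ℝ, ∀ n : ℕ, ‖∑ i ∈ Finset.range n, x (s i)‖ ≤ M,
        ∃ M' > (0 : ℝ), ∀ s : ℕ → ℕ, StrictMono s →
          ∀ n : ℕ, ‖∑ i ∈ Finset.range n, x (s i)‖ ≤ M',
        ∃ M > (0 : ℝ), ∀ p : ℕ → ℕ, Function.Bijective p →
          ∀ n : ℕ, ‖∑ i ∈ Finset.range n, x (p i)‖ ≤ M,
        ∀ p : ℕ → ℕ, Function.Bijective p →
          ∃ M : ℝ, ∀ n : ℕ, ‖∑ i ∈ Finset.range n, x (p i)‖ ≤ M ] :=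
  uub_tfae_general x
end

section
/- Let X be a normed space and (x_n) a sequence in X. If the set F = {p ∈ P : (∑_{i=1}^n x_{p(i)})_n is bounded} is not all of P, then F is a meager subset of P. -/
/-! The bijections whose partial sums are bounded by `M` form a closed set. If it contained a
basic open set, i.e. all bijections extending a prefix `p₀ 0, …, p₀ (N - 1)`, then for any
bijection `q` and any `n`, the bijection listing that prefix and then the values
`q 0, …, q (n - 1)` not yet listed has a partial sum that differs from the `n`-th partial sum of
`q` only by terms `x (p₀ i)` with `i < N`. So every `q` would have bounded partial sums. Hence these
closed sets are nowhere dense, and the set of bounded rearrangements is their countable union. -/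

/-- `P`, the Polish space of bijections `ℕ → ℕ`,
as a subspace of the product space `ℕ → ℕ`. -/
abbrev BijSeq : Type := {p : ℕ → ℕ // Function.Bijective p}

open Finset Topology

theorem PiNat.exists_cylinder_subset_of_mem_nhds {E : ℕ → Type*} [∀ n, TopologicalSpace (E n)]
    {x : ∀ n, E n} {s : Set (∀ n, E n)} (hs : s ∈ 𝓝 x) : ∃ N, PiNat.cylinder x N ⊆ s := by
  rw [nhds_pi, Filter.mem_pi] at hs
  obtain ⟨I, hI, t, ht, hts⟩ := hs
  obtain ⟨N, hN⟩ := hI.bddAbove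
  refine ⟨N + 1, fun y hy => hts fun i hi => ?_⟩
  rw [PiNat.mem_cylinder_iff.1 hy i (Nat.lt_succ_of_le (hN hi))]
  exact mem_of_mem_nhds (ht i)

theorem Set.InjOn.exists_equiv_eqOn {α : Type*} [Infinite α] {f : α → α} {s : Set α}
    (hf : Set.InjOn f s) (hs : s.Finite) : ∃ g : α ≃ α, Set.EqOn g f s := by
  obtain ⟨g, hg⟩ := Cardinal.extend_function_of_lt ⟨s.domRestrict f, hf.injective⟩
    (hs.lt_aleph0.trans_le (Cardinal.aleph0_le_mk α)) ⟨Equiv.refl α⟩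
  exact ⟨g, fun a ha => hg ⟨a, ha⟩⟩

theorem List.Nodup.exists_equiv_getElem_eq {L : List ℕ} (hL : L.Nodup) :
    ∃ p : ℕ ≃ ℕ, ∀ i (hi : i < L.length), p i = L[i] := by
  have hinj : Set.InjOn (fun i => L.getD i 0) (Set.Iio L.length) := by
    intro i hi j hj hij
    simp only [Set.mem_Iio] at hi hj
    simp only [List.getD_eq_getElem _ _ hi, List.getD_eq_getElem _ _ hj] at hij
    exact hL.getElem_inj_iff.1 hij
  obtain ⟨p, hp⟩ := hinj.exists_equiv_eqOn (Set.finite_Iio _)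
  exact ⟨p, fun i hi => (hp hi).trans (List.getD_eq_getElem _ _ hi)⟩

theorem exists_equiv_eqOn_range_and_image_range_eq {f : ℕ → ℕ} {N : ℕ}
    (hf : Set.InjOn f (range N)) (S : Finset ℕ) :
    ∃ p : ℕ ≃ ℕ, (∀ i < N, p i = f i) ∧ ∃ m, (range m).image p = (range N).image f ∪ S := by
  classical
  set L := (List.range N).map f ++ (S \ (range N).image f).toList
  have hL : L.Nodup := by
    refine List.Nodup.append ((List.nodup_range).map_on ?_) (nodup_toList _) ?_
    · exact fun i hi j hj => hf (by simpa using hi) (by simpa using hj)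
    · intro a ha hb
      simp only [List.mem_map, List.mem_range, mem_toList, Finset.mem_sdiff, mem_image,
        mem_range] at ha hb
      exact hb.2 ha
  obtain ⟨p, hp⟩ := hL.exists_equiv_getElem_eq
  have hL_toFinset : L.toFinset = (range N).image f ∪ S := by
    ext y
    simp only [L, List.toFinset_append, mem_union, List.mem_toFinset, List.mem_map, List.mem_range,
      mem_toList, Finset.mem_sdiff, mem_image, mem_range]
    by_cases hy : ∃ a < N, f a = y <;> simp [hy]
  refine ⟨p, fun i hi => ?_, L.length, ?_⟩
  · rw [hp i (by simp [L]; omega)]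
    simp [L, List.getElem_append_left, hi]
  · rw [← hL_toFinset]
    ext y
    simp only [mem_image, mem_range, List.mem_toFinset, List.mem_iff_getElem]
    exact ⟨fun ⟨i, hi, hy⟩ => ⟨i, hi, (hp i hi).symm.trans hy⟩,
      fun ⟨i, hi, hy⟩ => ⟨i, hi, (hp i hi).trans hy⟩⟩

theorem norm_sum_le_norm_sum_union_add_sum_norm {ι E : Type*} [DecidableEq ι]
    [SeminormedAddCommGroup E] (x : ι → E) (P Q : Finset ι) :
    ‖∑ j ∈ Q, x j‖ ≤ ‖∑ j ∈ P ∪ Q, x j‖ + ∑ j ∈ P, ‖x j‖ := by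
  have hsplit : ∑ j ∈ P \ Q, x j + ∑ j ∈ Q, x j = ∑ j ∈ P ∪ Q, x j := by
    rw [← union_sdiff_right]
    exact sum_sdiff subset_union_right
  calc ‖∑ j ∈ Q, x j‖ = ‖∑ j ∈ P ∪ Q, x j - ∑ j ∈ P \ Q, x j‖ := by
        rw [← hsplit, add_sub_cancel_left]
    _ ≤ ‖∑ j ∈ P ∪ Q, x j‖ + ‖∑ j ∈ P \ Q, x j‖ := norm_sub_le _ _
    _ ≤ ‖∑ j ∈ P ∪ Q, x j‖ + ∑ j ∈ P, ‖x j‖ := by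
        gcongr
        exact (norm_sum_le _ _).trans
          (sum_le_sum_of_subset_of_nonneg sdiff_subset fun j _ _ => norm_nonneg _)

theorem norm_sum_range_le_of_forall_eqOn_range {X : Type*} [SeminormedAddCommGroup X]
    {x : ℕ → X} {M : ℝ} {f : ℕ → ℕ} {N : ℕ} (hf : Set.InjOn f (range N))
    (hM : ∀ p : ℕ ≃ ℕ, (∀ i < N, p i = f i) → ∀ m, ‖∑ i ∈ range m, x (p i)‖ ≤ M)
    {q : ℕ → ℕ} (hq : q.Injective) (n : ℕ) :
    ‖∑ i ∈ range n, x (q i)‖ ≤ M + ∑ j ∈ (range N).image f, ‖x j‖ := by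
  classical
  obtain ⟨p, hpf, m, hpm⟩ := exists_equiv_eqOn_range_and_image_range_eq hf ((range n).image q)
  have hq_sum : ∑ i ∈ range n, x (q i) = ∑ j ∈ (range n).image q, x j :=
    (sum_image fun a _ b _ h => hq h).symm
  have hp_sum : ∑ i ∈ range m, x (p i) = ∑ j ∈ (range N).image f ∪ (range n).image q, x j := by
    rw [← hpm, sum_image fun a _ b _ h => p.injective h]
  rw [hq_sum]
  calc _ ≤ ‖∑ j ∈ (range N).image f ∪ (range n).image q, x j‖
          + ∑ j ∈ (range N).image f, ‖x j‖ := norm_sum_le_norm_sum_union_add_sum_norm _ _ _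
    _ ≤ _ := by
        gcongr
        exact hp_sum ▸ hM p hpf m

theorem isClosed_setOf_forall_norm_sum_le {X : Type*} [SeminormedAddCommGroup X] (x : ℕ → X)
    (M : ℝ) : IsClosed {p : ℕ → ℕ | ∀ n, ‖∑ i ∈ range n, x (p i)‖ ≤ M} := by
  simp only [Set.ofPred_forall]
  exact isClosed_iInter fun n => isClosed_le (by fun_prop) continuous_const

theorem F_meager_of_ne_univ_general
    {X : Type*} [NormedAddCommGroup X] (x : ℕ → X)
    (h : {p : BijSeq | ∃ M : ℝ, ∀ n : ℕ, ‖∑ i ∈ Finset.range n, x (p.1 i)‖ ≤ M} ≠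
      Set.univ) :
    IsMeagre {p : BijSeq | ∃ M : ℝ, ∀ n : ℕ, ‖∑ i ∈ Finset.range n, x (p.1 i)‖ ≤ M} := by
  set C : ℕ → Set BijSeq := fun M => {p | ∀ n, ‖∑ i ∈ range n, x (p.1 i)‖ ≤ M}
  have hF : {p : BijSeq | ∃ M : ℝ, ∀ n, ‖∑ i ∈ range n, x (p.1 i)‖ ≤ M} = ⋃ M : ℕ, C M := by
    ext p
    simp only [C, Set.mem_ofPred_eq, Set.mem_iUnion]
    refine ⟨fun ⟨M, hM⟩ => ?_, fun ⟨M, hM⟩ => ⟨M, hM⟩⟩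
    obtain ⟨M', hM'⟩ := exists_nat_ge M
    exact ⟨M', fun n => (hM n).trans hM'⟩
  rw [hF]
  refine isMeagre_iUnion fun M => IsNowhereDense.isMeagre ?_
  have hC : IsClosed (C M) :=
    (isClosed_setOf_forall_norm_sum_le x M).preimage continuous_subtype_val
  rw [hC.isNowhereDense_iff]
  refine Set.eq_empty_of_forall_notMem fun p₀ hp₀ => h (Set.eq_univ_of_forall fun q => ?_)
  obtain ⟨U, hU, hUC⟩ := (mem_nhds_subtype _ _ _).1 (isOpen_interior.mem_nhds hp₀)
  obtain ⟨N, hN⟩ := PiNat.exists_cylinder_subset_of_mem_nhds hU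
  have hM : ∀ p : ℕ ≃ ℕ, (∀ i < N, p i = p₀.1 i) → ∀ m, ‖∑ i ∈ range m, x (p i)‖ ≤ M :=
    fun p hp => interior_subset (s := C M) (a := ⟨p, p.bijective⟩)
      (hUC (hN (PiNat.mem_cylinder_iff.2 hp)))
  exact ⟨_, norm_sum_range_le_of_forall_eqOn_range p₀.2.1.injOn hM q.2.1⟩

theorem F_meager_of_ne_univ
    {X : Type*} [NormedAddCommGroup X] [NormedSpace ℝ X] (x : ℕ → X)
    (h : {p : BijSeq | ∃ M : ℝ, ∀ n : ℕ, ‖∑ i ∈ Finset.range n, x (p.1 i)‖ ≤ M} ≠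
      Set.univ) :
    IsMeagre {p : BijSeq | ∃ M : ℝ, ∀ n : ℕ, ‖∑ i ∈ Finset.range n, x (p.1 i)‖ ≤ M} :=
  F_meager_of_ne_univ_general x h
end

section
/- Let X be a Banach space, (x_n) a sequence in X with liminf ‖x_n‖ = 0, and I an ideal on ℕ with the Baire property. If there exists a bijection p' : ℕ → ℕ for which the partial sums of ∑ x_{p'(n)} are unbounded, then the set F(I) = {p ∈ P : (∑_{i=1}^n x_{p(i)})_n is I-bounded} is meager in P. -/
open Filter

/-- An ideal `I` on `ℕ` has the Baire property if the corresponding set of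
characteristic functions is Baire measurable in the Cantor space `ℕ → Bool`. -/
def IdealHasBaireProperty (I : Set (Set ℕ)) : Prop :=
  BaireMeasurableSet {t : ℕ → Bool | {n : ℕ | t n = true} ∈ I}

/-!
A Baire-measurable set of the Cantor space that is invariant under finite changes is meagre or
comeagre. The indicator set of `I` is such a set, and it cannot be comeagre because the
complementation homeomorphism would make it meet its image, putting two complementary sets in the
proper ideal `I`. So it is meagre, which yields consecutive intervals `[a k, a (k + 1))` such
that every `A ∈ I` contains only finitely many of them. A bijection in `F(I)` therefore has, for
some integer `M` and all large `k`, a partial sum of norm `≤ M` indexed inside the `k`-th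
interval. For fixed `M` and a fixed starting block this condition is closed with empty interior:
any finite prefix of a bijection can be completed by an initial segment of `p'` with a partial sum
of norm `> M`, and then, thanks to `liminf ‖x n‖ = 0`, by fresh indices keeping every partial sum
above `M` across a whole interval.
-/

open Set Topology PiNat

section Cylinders

variable {α : Type*} [TopologicalSpace α] [DiscreteTopology α]

theorem exists_cylinder_subset {U : Set (ℕ → α)} (hU : IsOpen U) {x : ℕ → α} (hx : x ∈ U) :
    ∃ n, cylinder x n ⊆ U := by
  obtain ⟨_, ⟨y, n, rfl⟩, hxy, hsub⟩ :=
    (isTopologicalBasis_cylinders fun _ : ℕ => α).exists_subset_of_mem_open hx hU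
  exact ⟨n, mem_cylinder_iff_eq.1 hxy ▸ hsub⟩

theorem exists_block_forall_mem_of_dense [Finite α] [Nonempty α] {V : Set (ℕ → α)}
    (hVo : IsOpen V) (hVd : Dense V) (a : ℕ) :
    ∃ b, a < b ∧ ∃ τ : ℕ → α, ∀ t, (∀ i ∈ Ico a b, t i = τ i) → t ∈ V := by
  classical
  have := Fintype.ofFinite α
  -- handle the finitely many prefixes on `[0, a)` one at a time
  suffices ∀ P : Finset (Fin a → α), ∃ b, a < b ∧ ∃ τ : ℕ → α, ∀ σ ∈ P, ∀ t,
      (∀ i : Fin a, t i = σ i) → (∀ i ∈ Ico a b, t i = τ i) → t ∈ V by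
    obtain ⟨b, hab, τ, hτ⟩ := this Finset.univ
    exact ⟨b, hab, τ, fun t ht => hτ (fun i => t i) (Finset.mem_univ _) t (fun _ => rfl) ht⟩
  intro P
  induction P using Finset.induction_on with
  | empty => exact ⟨a + 1, a.lt_succ_self, fun _ => Classical.arbitrary α, by simp⟩
  | insert σ P _ ih =>
    obtain ⟨b, hab, τ, hτ⟩ := ih
    let v : ℕ → α := fun i => if h : i < a then σ ⟨i, h⟩ else τ i
    obtain ⟨w, hwv, hwV⟩ :=
      hVd.inter_open_nonempty (cylinder v b) (isOpen_cylinder _ v b) ⟨v, self_mem_cylinder v b⟩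
    obtain ⟨d, hd⟩ := exists_cylinder_subset hVo hwV
    refine ⟨max b d, hab.trans_le (le_max_left _ _), w, ?_⟩
    rintro σ' hσ' t htσ htw
    rcases Finset.mem_insert.1 hσ' with rfl | hσ'
    · refine hd fun i hi => ?_
      by_cases hia : i < a
      · rw [htσ ⟨i, hia⟩, hwv i (hia.trans hab)]
        simp [v, hia]
      · exact htw i ⟨not_lt.1 hia, hi.trans_le (le_max_right _ _)⟩
    · refine hτ σ' hσ' t htσ fun i hi => ?_
      rw [htw i ⟨hi.1, hi.2.trans_le (le_max_left _ _)⟩, hwv i hi.2]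
      simp [v, not_lt.2 hi.1]

end Cylinders

theorem exists_antitone_isOpen_dense_of_mem_residual {X : Type*} [TopologicalSpace X]
    {s : Set X} (hs : s ∈ residual X) :
    ∃ U : ℕ → Set X, Antitone U ∧ (∀ n, IsOpen (U n)) ∧ (∀ n, Dense (U n)) ∧ ⋂ n, U n ⊆ s := by
  obtain ⟨S, hSo, hSd, hSc, hSs⟩ := mem_residual_iff.1 hs
  obtain ⟨f, hf⟩ := (hSc.insert univ).exists_eq_range (insert_nonempty _ _)
  have hf' : ∀ j, IsOpen (f j) ∧ Dense (f j) := fun j => by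
    rcases (hf ▸ mem_range_self j : f j ∈ insert univ S) with h | h
    exacts [h ▸ ⟨isOpen_univ, dense_univ⟩, ⟨hSo _ h, hSd _ h⟩]
  have hfin (n : ℕ) : (f '' Iic n).Finite := (finite_Iic n).image f
  refine ⟨fun n => ⋂₀ (f '' Iic n),
    fun m n hmn => sInter_subset_sInter (image_mono (Iic_subset_Iic.2 hmn)),
    fun n => (hfin n).isOpen_sInter (forall_mem_image.2 fun j _ => (hf' j).1),
    fun n => (hfin n).dense_sInter (forall_mem_image.2 fun j _ => (hf' j).1)
      (forall_mem_image.2 fun j _ => (hf' j).2), fun x hx => hSs fun t ht => ?_⟩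
  obtain ⟨j, rfl⟩ : t ∈ range f := hf ▸ mem_insert_of_mem _ ht
  exact mem_iInter.1 hx j _ (mem_image_of_mem f (le_refl j))

theorem exists_eq_on_of_pairwise_disjoint {ι β γ : Type*} [Nonempty γ] {s : ι → Set β}
    (hs : Pairwise (Function.onFun Disjoint s)) (f : ι → β → γ) :
    ∃ g : β → γ, ∀ i, ∀ x ∈ s i, g x = f i x := by
  classical
  refine ⟨fun x => if h : ∃ i, x ∈ s i then f h.choose x else Classical.arbitrary γ,
    fun i x hx => ?_⟩
  have h : ∃ i, x ∈ s i := ⟨i, hx⟩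
  have : h.choose = i := by
    by_contra hne
    exact disjoint_left.1 (hs hne) h.choose_spec hx
  simp [h, this]

theorem exists_blocks_of_mem_residual {α : Type*} [TopologicalSpace α] [DiscreteTopology α]
    [Finite α] [Nonempty α] {s : Set (ℕ → α)} (hs : s ∈ residual _) :
    ∃ a : ℕ → ℕ, StrictMono a ∧ ∃ τ : ℕ → α,
      ∀ t, (∃ᶠ k in atTop, ∀ i ∈ Ico (a k) (a (k + 1)), t i = τ i) → t ∈ s := by
  obtain ⟨U, hUanti, hUo, hUd, hUs⟩ := exists_antitone_isOpen_dense_of_mem_residual hs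
  choose b hb τs hτs using fun k => exists_block_forall_mem_of_dense (hUo k) (hUd k)
  let a : ℕ → ℕ := fun k => Nat.rec 0 (fun k ak => b k ak) k
  have ha : StrictMono a := strictMono_nat_of_lt_succ fun k => hb k (a k)
  obtain ⟨τ, hτ⟩ := exists_eq_on_of_pairwise_disjoint ha.monotone.pairwise_disjoint_on_Ico_succ
    fun k => τs k (a k)
  refine ⟨a, ha, τ, fun t ht => hUs (mem_iInter.2 fun n => ?_)⟩
  obtain ⟨k, hnk, hk⟩ := ht.forall_exists_of_atTop n
  exact hUanti hnk (hτs k (a k) t fun i hi => (hk i hi).trans (hτ k i hi))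

section ZeroOne

variable {α : Type*} [TopologicalSpace α] [DiscreteTopology α]

def prefixSwap [DecidableEq α] (d : ℕ) (σ : Fin d → α) (y : ℕ → α) : (ℕ → α) ≃ₜ (ℕ → α) :=
  Homeomorph.piCongrRight fun i =>
    (if h : i < d then Equiv.swap (σ ⟨i, h⟩) (y i) else Equiv.refl α).toHomeomorphOfDiscrete

theorem prefixSwap_apply_of_lt [DecidableEq α] {d : ℕ} {σ : Fin d → α} {y t : ℕ → α}
    (ht : ∀ i : Fin d, t i = σ i) {i : ℕ} (hi : i < d) : prefixSwap d σ y t i = y i := by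
  simp [prefixSwap, Equiv.toHomeomorphOfDiscrete, hi, ht ⟨i, hi⟩]

theorem prefixSwap_apply_of_le [DecidableEq α] {d : ℕ} {σ : Fin d → α} {y t : ℕ → α}
    {i : ℕ} (hi : d ≤ i) : prefixSwap d σ y t i = t i := by
  simp [prefixSwap, Equiv.toHomeomorphOfDiscrete, not_lt.2 hi]

theorem BaireMeasurableSet.isMeagre_or_mem_residual [Countable α] {S : Set (ℕ → α)}
    (hS : BaireMeasurableSet S)
    (hinv : ∀ s t : ℕ → α, {n | s n ≠ t n}.Finite → s ∈ S → t ∈ S) :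
    IsMeagre S ∨ S ∈ residual _ := by
  classical
  obtain ⟨U, hUo, hSU⟩ := hS.residualEq_isOpen
  rcases U.eq_empty_or_nonempty with rfl | ⟨y, hy⟩
  · exact Or.inl (eventuallyEq_empty.1 hSU)
  right
  obtain ⟨d, hd⟩ := exists_cylinder_subset hUo hy
  have hUS : IsMeagre (cylinder y d \ S) := by
    refine IsMeagre.mono (sdiff_subset_sdiff_left hd) ?_
    filter_upwards [hSU] with t ht
    exact fun h => h.2 (ht.mpr h.1)
  -- every `t ∉ S` is moved into `cylinder y d \ S` by one of countably many homeomorphisms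
  have hcover : Sᶜ ⊆ ⋃ σ : Fin d → α, prefixSwap d σ y ⁻¹' (cylinder y d \ S) := by
    intro t ht
    refine mem_iUnion.2 ⟨fun i => t i, fun i hi => prefixSwap_apply_of_lt (fun _ => rfl) hi,
      fun hS' => ht (hinv _ _ ((finite_lt_nat d).subset fun i hi => ?_) hS')⟩
    by_contra hid
    exact hi (prefixSwap_apply_of_le (not_lt.1 hid))
  rw [← compl_compl S]
  exact (isMeagre_iUnion fun σ => (hUS.preimage_of_isOpenMap (prefixSwap d σ y).continuous
    (prefixSwap d σ y).isOpenMap)).mono hcover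

end ZeroOne

section Ideal

variable {I : Set (Set ℕ)}

theorem mem_ideal_of_finite_change
    (hUnion : ∀ A B : Set ℕ, A ∈ I → B ∈ I → A ∪ B ∈ I)
    (hSub : ∀ A B : Set ℕ, A ⊆ B → B ∈ I → A ∈ I)
    (hFin : ∀ A : Set ℕ, A.Finite → A ∈ I) {s t : ℕ → Bool} (hst : {n | s n ≠ t n}.Finite)
    (hs : {n | s n = true} ∈ I) : {n | t n = true} ∈ I :=
  hSub _ _ (fun n hn => by by_cases h : s n = t n <;> simp_all) (hUnion _ _ hs (hFin _ hst))

theorem isMeagre_setOf_mem_ideal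
    (hUnion : ∀ A B : Set ℕ, A ∈ I → B ∈ I → A ∪ B ∈ I)
    (hSub : ∀ A B : Set ℕ, A ⊆ B → B ∈ I → A ∈ I)
    (hProper : (Set.univ : Set ℕ) ∉ I)
    (hFin : ∀ A : Set ℕ, A.Finite → A ∈ I)
    (hBP : IdealHasBaireProperty I) :
    IsMeagre {t : ℕ → Bool | {n : ℕ | t n = true} ∈ I} := by
  refine (hBP.isMeagre_or_mem_residual fun _ _ =>
    mem_ideal_of_finite_change hUnion hSub hFin).resolve_right fun hres => ?_
  -- `t` and its complement `!t` cannot both index members of a proper ideal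
  let c : (ℕ → Bool) ≃ₜ (ℕ → Bool) :=
    Homeomorph.piCongrRight fun _ => Equiv.boolNot.toHomeomorphOfDiscrete
  have hres' := tendsto_residual_of_isOpenMap c.continuous c.isOpenMap hres
  obtain ⟨t, ht, hct⟩ := (dense_of_mem_residual (inter_mem hres hres')).nonempty
  have huniv : {n | t n = true} ∪ {n | c t n = true} = univ := by
    ext n
    cases h : t n <;> simp [c, Equiv.toHomeomorphOfDiscrete, h]
  exact hProper (huniv ▸ hUnion _ _ ht hct)

theorem exists_blocks_not_subset_of_mem_ideal
    (hUnion : ∀ A B : Set ℕ, A ∈ I → B ∈ I → A ∪ B ∈ I)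
    (hSub : ∀ A B : Set ℕ, A ⊆ B → B ∈ I → A ∈ I)
    (hProper : (Set.univ : Set ℕ) ∉ I)
    (hFin : ∀ A : Set ℕ, A.Finite → A ∈ I)
    (hBP : IdealHasBaireProperty I) :
    ∃ a : ℕ → ℕ, StrictMono a ∧ ∀ A ∈ I, ∀ᶠ k in atTop, ¬ Ico (a k) (a (k + 1)) ⊆ A := by
  classical
  obtain ⟨a, ha, τ, hτ⟩ :=
    exists_blocks_of_mem_residual (isMeagre_setOf_mem_ideal hUnion hSub hProper hFin hBP)
  refine ⟨a, ha, fun A hA => ?_⟩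
  by_contra h
  simp only [not_eventually, not_not] at h
  -- the subset `A ∩ {τ}` of `A` agrees with `τ` on every block contained in `A`
  refine hτ (fun n => decide (n ∈ A) && τ n) (h.mono fun k hk i hi => by simp [hk hi])
    (hSub _ _ (fun n hn => by simp_all) hA)

end Ideal

theorem frequently_lt_or_tendsto_atTop_of_liminf_eq_zero {ι : Type*} {l : Filter ι}
    {u : ι → ℝ} (h : liminf u l = 0) :
    (∀ ε > 0, ∃ᶠ n in l, u n < ε) ∨ Tendsto u l atTop := by
  by_contra! ⟨⟨ε, hε, hfreq⟩, htend⟩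
  obtain ⟨R, hR⟩ : ∃ R, ¬ ∀ᶠ n in l, R ≤ u n := by simpa [tendsto_atTop] using htend
  -- `liminf` is the junk value `0` unless `u` is cobounded, which `R` witnesses
  have hcob : IsCoboundedUnder (· ≥ ·) l u := ⟨R, fun b hb => by
    by_contra hRb
    exact hR (Filter.Eventually.mono hb fun n hn => (lt_of_not_ge hRb).le.trans hn)⟩
  linarith [le_liminf_of_le hcob hfreq]

theorem frequently_lt_norm_add_of_liminf_eq_zero {ι E : Type*} [SeminormedAddCommGroup E]
    {l : Filter ι} [l.NeBot] {x : ι → E} (hx : liminf (fun n => ‖x n‖) l = 0) {c : ℝ} {s : E}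
    (hs : c < ‖s‖) : ∃ᶠ n in l, c < ‖s + x n‖ := by
  rcases frequently_lt_or_tendsto_atTop_of_liminf_eq_zero hx with h | h
  · refine (h _ (sub_pos.2 hs)).mono fun n hn => ?_
    have := norm_sub_norm_le s (-x n)
    rw [sub_neg_eq_add, norm_neg] at this
    linarith
  · refine ((h.eventually_gt_atTop (‖s‖ + c)).mono fun n hn => ?_).frequently
    have := norm_sub_norm_le (x n) (-s)
    rw [sub_neg_eq_add, norm_neg, add_comm] at this
    linarith

theorem frequently_lt_of_not_bounded {α : Type*} [LinearOrder α] {u : ℕ → α}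
    (h : ¬ ∃ M, ∀ n, u n ≤ M) (M : α) : ∃ᶠ n in atTop, M < u n := by
  refine fun h' => h ?_
  simp only [not_lt] at h'
  obtain ⟨B, hB⟩ := (isBoundedUnder_of_eventually_le h').bddAbove_range
  exact ⟨B, fun n => hB (mem_range_self n)⟩

theorem exists_prefix_norm_sum_take_gt {E : Type*} [SeminormedAddCommGroup E] {x : ℕ → E}
    {c : ℝ} (hx : ∀ s : E, c < ‖s‖ → ∃ᶠ j in atTop, c < ‖s + x j‖) {l : List ℕ}
    (hl : l.Nodup) (hc : c < ‖(l.map x).sum‖) (r : ℕ) :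
    ∃ l' : List ℕ, l <+: l' ∧ l'.Nodup ∧ l'.length = l.length + r ∧
      ∀ n, l.length ≤ n → n ≤ l'.length → c < ‖((l'.take n).map x).sum‖ := by
  induction r with
  | zero =>
    refine ⟨l, List.prefix_refl l, hl, rfl, fun n h₁ h₂ => ?_⟩
    rwa [le_antisymm h₂ h₁, List.take_length]
  | succ r ih =>
    obtain ⟨l', hpre, hnd, hlen, hgt⟩ := ih
    have hlast : c < ‖(l'.map x).sum‖ := by
      simpa using hgt l'.length (by omega) le_rfl
    obtain ⟨j, hj, hjl⟩ := ((hx _ hlast).and_eventually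
      (Nat.cofinite_eq_atTop ▸ l'.finite_toSet.eventually_cofinite_notMem)).exists
    refine ⟨l' ++ [j], hpre.trans (List.prefix_append _ _), ?_, by simp [hlen]; omega,
      fun n h₁ h₂ => ?_⟩
    · simpa [List.nodup_append, hnd] using fun a ha (h : a = j) => hjl (h ▸ ha)
    · rcases Nat.lt_or_ge l'.length n with hn | hn
      · have : n = (l' ++ [j]).length := by simp at h₂ ⊢; omega
        simpa [this] using hj
      · rw [List.take_append_of_le_length hn]
        exact hgt n h₁ hn

theorem sum_range_eq_sum_take_map {M : Type*} [AddCommMonoid M] (f : ℕ → M) {q : ℕ → ℕ}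
    {l : List ℕ} (hq : ∀ i (hi : i < l.length), q i = l[i]) {n : ℕ} (hn : n ≤ l.length) :
    ∑ i ∈ Finset.range n, f (q i) = ((l.take n).map f).sum := by
  induction n with
  | zero => simp
  | succ n ih =>
    rw [Finset.sum_range_succ, ih (by omega), hq n (by omega), List.map_take, List.map_take,
      List.sum_take_succ _ _ (by simpa using hn), List.getElem_map]

theorem List.Nodup.exists_equiv_getElem {l : List ℕ} (hl : l.Nodup) :
    ∃ q : ℕ ≃ ℕ, ∀ i (hi : i < l.length), q i = l[i] := by
  classical
  have : Infinite {i // ¬ i < l.length} := (finite_lt_nat l.length).infinite_compl.to_subtype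
  have : Infinite {j // j ∉ l} := l.finite_toSet.infinite_compl.to_subtype
  have : Denumerable {i // ¬ i < l.length} := Denumerable.ofEncodableOfInfinite _
  have : Denumerable {j // j ∉ l} := Denumerable.ofEncodableOfInfinite _
  let e : {i // i < l.length} ⊕ {i // ¬ i < l.length} ≃ {j // j ∈ l} ⊕ {j // j ∉ l} :=
    (Fin.equivSubtype.symm.trans (hl.getEquiv l)).sumCongr
      ((Denumerable.eqv _).trans (Denumerable.eqv _).symm)
  refine ⟨(Equiv.sumCompl _).symm.trans (e.trans (Equiv.sumCompl _)), fun i hi => ?_⟩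
  rw [Equiv.trans_apply, Equiv.trans_apply,
    Equiv.sumCompl_symm_apply_of_pos (p := (· < l.length)) hi]
  simp [e]

section PartialSums

variable {E : Type*} [SeminormedAddCommGroup E] {x : ℕ → E}

theorem exists_nodup_prefix_norm_sum_gt {p' : ℕ → ℕ} (hp' : Function.Bijective p')
    (hub : ∀ M : ℝ, ∃ᶠ L in atTop, M < ‖∑ i ∈ Finset.range L, x (p' i)‖) {p₀ : ℕ → ℕ}
    (hp₀ : Function.Injective p₀) (N : ℕ) (M : ℝ) :
    ∃ l : List ℕ, l.Nodup ∧ (List.range N).map p₀ <+: l ∧ M < ‖(l.map x).sum‖ := by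
  classical
  set l₀ := (List.range N).map p₀
  obtain ⟨L₀, hL₀⟩ :=
    Finset.exists_nat_subset_range (l₀.toFinset.image (Function.surjInv hp'.2))
  obtain ⟨L, hL, hM⟩ := (hub M).forall_exists_of_atTop L₀
  -- the first `L` values of `p'`, reordered so that they start with `l₀`
  set l := l₀ ++ ((List.range L).map p').filter (· ∉ l₀)
  have hl : l.Nodup := by
    refine List.nodup_append.2 ⟨List.nodup_range.map hp₀,
      (List.nodup_range.map hp'.1).filter _, fun j hj j' hj' => ?_⟩
    rintro rfl
    simp_all
  have hl₀ : ∀ j ∈ l₀, ∃ i < L, p' i = j := fun j hj =>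
    ⟨Function.surjInv hp'.2 j, lt_of_lt_of_le (Finset.mem_range.1 (hL₀ (by simpa using
      ⟨j, hj, rfl⟩))) hL, Function.surjInv_eq hp'.2 j⟩
  have hfinset : l.toFinset = (Finset.range L).image p' := by
    ext j
    simp only [l, List.toFinset_append, Finset.mem_union, List.mem_toFinset, List.mem_filter,
      List.mem_map, List.mem_range, Finset.mem_image, Finset.mem_range, decide_eq_true_eq]
    constructor
    · rintro (hj | ⟨hj, -⟩)
      exacts [hl₀ j hj, hj]
    · intro hj
      by_cases hj₀ : j ∈ l₀ <;> simp_all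
  refine ⟨l, hl, List.prefix_append _ _, ?_⟩
  rwa [← List.sum_toFinset _ hl, hfinset, Finset.sum_image fun _ _ _ _ h => hp'.1 h]

theorem exists_equiv_eq_prefix_norm_sum_gt_on_block
    (hx : ∀ (c : ℝ) (s : E), c < ‖s‖ → ∃ᶠ j in atTop, c < ‖s + x j‖)
    {p' : ℕ → ℕ} (hp' : Function.Bijective p')
    (hub : ∀ M : ℝ, ∃ᶠ L in atTop, M < ‖∑ i ∈ Finset.range L, x (p' i)‖)
    {a : ℕ → ℕ} (ha : StrictMono a) {p₀ : ℕ → ℕ} (hp₀ : Function.Injective p₀) (N m : ℕ)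
    (M : ℝ) :
    ∃ q : ℕ ≃ ℕ, (∀ i < N, q i = p₀ i) ∧
      ∃ k ≥ m, ∀ n ∈ Finset.Ico (a k) (a (k + 1)), M < ‖∑ i ∈ Finset.range n, x (q i)‖ := by
  obtain ⟨l, hl, hpre, hM⟩ := exists_nodup_prefix_norm_sum_gt hp' hub hp₀ N M
  set k := m + l.length
  have hk : l.length ≤ a k := le_trans (by omega) ha.le_apply
  have hk' := ha (Nat.lt_succ_self k)
  obtain ⟨l', hpre', hl', hlen, hgt⟩ :=
    exists_prefix_norm_sum_take_gt (hx M) hl hM (a (k + 1) - l.length)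
  obtain ⟨q, hq⟩ := hl'.exists_equiv_getElem
  refine ⟨q, fun i hi => ?_, k, by omega, fun n hn => ?_⟩
  · have hi' : i < ((List.range N).map p₀).length := by simpa using hi
    rw [hq i (by have := (hpre.trans hpre').length_le; omega), ← (hpre.trans hpre').getElem hi']
    simp
  · rw [Finset.mem_Ico] at hn
    rw [sum_range_eq_sum_take_map x hq (by omega)]
    exact hgt n (by omega) (by omega)

def blockBoundedSet (x : ℕ → E) (a : ℕ → ℕ) (M : ℝ) (m : ℕ) : Set BijSeq :=
  ⋂ k ≥ m, ⋃ n ∈ Finset.Ico (a k) (a (k + 1)), {p | ‖∑ i ∈ Finset.range n, x (p.1 i)‖ ≤ M}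

theorem isClosed_blockBoundedSet (a : ℕ → ℕ) (M : ℝ) (m : ℕ) :
    IsClosed (blockBoundedSet x a M m) := by
  refine isClosed_biInter fun k _ => isClosed_biUnion_finset fun n _ => isClosed_le ?_
    continuous_const
  exact (continuous_finsetSum _ fun i _ => (continuous_of_discreteTopology (f := x)).comp
    ((continuous_apply i).comp continuous_subtype_val)).norm

theorem interior_blockBoundedSet_eq_empty
    (hx : ∀ (c : ℝ) (s : E), c < ‖s‖ → ∃ᶠ j in atTop, c < ‖s + x j‖)
    {p' : ℕ → ℕ} (hp' : Function.Bijective p')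
    (hub : ∀ M : ℝ, ∃ᶠ L in atTop, M < ‖∑ i ∈ Finset.range L, x (p' i)‖)
    {a : ℕ → ℕ} (ha : StrictMono a) (M : ℝ) (m : ℕ) :
    interior (blockBoundedSet x a M m) = ∅ := by
  refine eq_empty_iff_forall_notMem.2 fun p hp => ?_
  obtain ⟨V, hV, hVU⟩ := isOpen_induced_iff.1 (isOpen_interior (s := blockBoundedSet x a M m))
  obtain ⟨N, hN⟩ := exists_cylinder_subset hV (hVU ▸ hp : p ∈ Subtype.val ⁻¹' V)
  obtain ⟨q, hqN, k, hkm, hk⟩ :=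
    exists_equiv_eq_prefix_norm_sum_gt_on_block hx hp' hub ha p.2.1 N m M
  have hq : (⟨q, q.bijective⟩ : BijSeq) ∈ interior (blockBoundedSet x a M m) :=
    hVU ▸ hN hqN
  obtain ⟨n, hn, hle⟩ := mem_iUnion₂.1 (mem_iInter₂.1 (interior_subset hq) k hkm)
  exact (hk n hn).not_ge hle

end PartialSums

theorem F_ideal_meager_general
    {X : Type*} [NormedAddCommGroup X]
    (x : ℕ → X)
    (hliminf : Filter.liminf (fun n => ‖x n‖) atTop = 0)
    (I : Set (Set ℕ))
    (hUnion : ∀ A B : Set ℕ, A ∈ I → B ∈ I → A ∪ B ∈ I)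
    (hSub : ∀ A B : Set ℕ, A ⊆ B → B ∈ I → A ∈ I)
    (hProper : (Set.univ : Set ℕ) ∉ I)
    (hFin : ∀ A : Set ℕ, A.Finite → A ∈ I)
    (hBP : IdealHasBaireProperty I)
    (p' : ℕ → ℕ) (hp' : Function.Bijective p')
    (hub : ¬ ∃ M : ℝ, ∀ n : ℕ, ‖∑ i ∈ Finset.range n, x (p' i)‖ ≤ M) :
    IsMeagre {p : BijSeq |
      ∃ M > (0 : ℝ), {n : ℕ | M < ‖∑ i ∈ Finset.range n, x (p.1 i)‖} ∈ I} := by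
  obtain ⟨a, ha, hblocks⟩ := exists_blocks_not_subset_of_mem_ideal hUnion hSub hProper hFin hBP
  have hx : ∀ (c : ℝ) (s : X), c < ‖s‖ → ∃ᶠ j in atTop, c < ‖s + x j‖ :=
    fun _ _ => frequently_lt_norm_add_of_liminf_eq_zero hliminf
  have hnowhere (M m : ℕ) : IsNowhereDense (blockBoundedSet x a M m) :=
    (isClosed_blockBoundedSet a M m).isNowhereDense_iff.2
      (interior_blockBoundedSet_eq_empty hx hp' (frequently_lt_of_not_bounded hub) ha M m)
  refine (isMeagre_iUnion fun M : ℕ => isMeagre_iUnion fun m => (hnowhere M m).isMeagre).mono ?_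
  rintro p ⟨M, -, hM⟩
  have hM' : {n | (⌈M⌉₊ : ℝ) < ‖∑ i ∈ Finset.range n, x (p.1 i)‖} ∈ I :=
    hSub _ _ (fun n hn => (Nat.le_ceil M).trans_lt hn) hM
  obtain ⟨m, hm⟩ := eventually_atTop.1 (hblocks _ hM')
  refine mem_iUnion₂.2 ⟨⌈M⌉₊, m, mem_iInter₂.2 fun k hk => ?_⟩
  obtain ⟨n, hn, hnM⟩ := not_subset.1 (hm k hk)
  exact mem_iUnion₂.2 ⟨n, Finset.mem_Ico.2 hn, by simpa using hnM⟩

theorem F_ideal_meager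
    {X : Type*} [NormedAddCommGroup X] [NormedSpace ℝ X] [CompleteSpace X]
    (x : ℕ → X)
    (hliminf : Filter.liminf (fun n => ‖x n‖) atTop = 0)
    (I : Set (Set ℕ))
    (hEmpty : ∅ ∈ I)
    (hUnion : ∀ A B : Set ℕ, A ∈ I → B ∈ I → A ∪ B ∈ I)
    (hSub : ∀ A B : Set ℕ, A ⊆ B → B ∈ I → A ∈ I)
    (hProper : (Set.univ : Set ℕ) ∉ I)
    (hFin : ∀ A : Set ℕ, A.Finite → A ∈ I)
    (hBP : IdealHasBaireProperty I)
    (p' : ℕ → ℕ) (hp' : Function.Bijective p')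
    (hub : ¬ ∃ M : ℝ, ∀ n : ℕ, ‖∑ i ∈ Finset.range n, x (p' i)‖ ≤ M) :
    IsMeagre {p : BijSeq |
      ∃ M > (0 : ℝ), {n : ℕ | M < ‖∑ i ∈ Finset.range n, x (p.1 i)‖} ∈ I} :=
  F_ideal_meager_general x hliminf I hUnion hSub hProper hFin hBP p' hp' hub
end
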